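/- arXiv:1703.07448 — 6 statements merged into one kernel-verified Lean document; each statement's English description precedes it below -/
import Mathlib

section
/- Let n ≥ 1, let λ ∈ ℝ^n satisfy λ_1 ≥ λ_2 ≥ ⋯ ≥ λ_n ≥ 0, let D ∈ ℝ^n have nonnegative entries, let F ≥ 0, UB ∈ ℝ, and let 1 ≤ m ≤ n be such that ∑_{l=1}^m λ_l > 0. Suppose that ∑_{l=1}^n λ_l D_{(l)} + F ≤ UB and that for some index i one has D_i > UB / ∑_{l=1}^m λ_l. Then for every permutation σ of {1,…,n} with D_{σ(1)} ≥ D_{σ(2)} ≥ ⋯ ≥ D_{σ(n)}, the position r with σ(r) = i satisfies r ≤ m − 1; that is, the i-th entry is sorted strictly before position m in any nonincreasing ordering of D. -/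
/-- The entries of `D` rearranged in nonincreasing order. -/
noncomputable def sortDesc {n : ℕ} (D : Fin n → ℝ) : Fin n → ℝ :=
  fun i => D (Tuple.sort (fun j => -D j) i)

/-- If the ordered median value plus nonnegative set-up costs `F` is at most `UB`
and `D i > UB / ∑_{l=1}^m λ_l`, then in any nonincreasing ordering `σ` of `D`
the position `r` with `σ r = i` comes strictly before position `m`
(indices are 0-based: `m : Fin n` stands for the 1-based position `m+1`). -/
theorem stmt1 {n : ℕ} (hn : 1 ≤ n) (lam D : Fin n → ℝ)
    (hlam : Antitone lam) (hlam0 : ∀ i, 0 ≤ lam i)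
    (hD : ∀ i, 0 ≤ D i) (F UB : ℝ) (hF : 0 ≤ F) (m : Fin n)
    (hpos : 0 < ∑ l ∈ Finset.Iic m, lam l)
    (hUB : ∑ l, lam l * sortDesc D l + F ≤ UB)
    (i : Fin n) (hi : UB / ∑ l ∈ Finset.Iic m, lam l < D i)
    (σ : Equiv.Perm (Fin n)) (hσ : Antitone fun r => D (σ r))
    (r : Fin n) (hr : σ r = i) : r < m := by
  by_contra hcon
  push_neg at hcon
  have hsort : ∀ l, sortDesc D l = D (σ l) := by
    have hmono : Monotone ((fun j => -D j) ∘ σ) := fun a b hab => neg_le_neg (hσ hab)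
    have heq := (Tuple.comp_sort_eq_comp_iff_monotone (f := fun j => -D j) (σ := σ)).mpr hmono
    intro l
    have h := congrFun heq l
    simp only [Function.comp_apply, neg_inj] at h
    simp [sortDesc, ← h]
  set S := ∑ l ∈ Finset.Iic m, lam l with hS
  have h1 : UB < S * D i := by
    rw [div_lt_iff₀ hpos] at hi; linarith
  have h2 : S * D i ≤ ∑ l ∈ Finset.Iic m, lam l * D (σ l) := by
    rw [hS, Finset.sum_mul]
    apply Finset.sum_le_sum
    intro l hl
    have hlr : l ≤ r := le_trans (Finset.mem_Iic.mp hl) hcon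
    have : D i ≤ D (σ l) := by rw [← hr]; exact hσ hlr
    exact mul_le_mul_of_nonneg_left this (hlam0 l)
  have h3 : ∑ l ∈ Finset.Iic m, lam l * D (σ l) ≤ ∑ l, lam l * D (σ l) :=
    Finset.sum_le_sum_of_subset_of_nonneg (Finset.subset_univ _)
      (fun l _ _ => mul_nonneg (hlam0 l) (hD _))
  have h4 : ∑ l, lam l * sortDesc D l = ∑ l, lam l * D (σ l) := by
    simp [hsort]
  linarith
end

section
/- Let n ≥ 1, let D ∈ ℝ^n, and let 1 ≤ K ≤ n. Then K·D_{(K)} + ∑_{i=1}^n (D_i − D_{(K)})_+ = ∑_{i=1}^K D_{(i)}. Consequently, ∑_{i=1}^K D_{(i)} = min_{t∈ℝ} ( K·t + ∑_{i=1}^n (D_i − t)_+ ), and the minimum is attained at t = D_{(K)}, the K-th largest entry of D. -/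
/-- Ogryczak–Tamir: `K·D_{(K)} + ∑_i (D_i − D_{(K)})_+ = ∑_{i=1}^K D_{(i)}`, and
consequently `∑_{i=1}^K D_{(i)} = min_{t∈ℝ} (K·t + ∑_i (D_i − t)_+)`, the minimum
being attained at `t = D_{(K)}` (here `K : Fin n` stands for the 1-based value `K+1`). -/
theorem stmt3 {n : ℕ} (hn : 1 ≤ n) (D : Fin n → ℝ) (K : Fin n) :
    (((K : ℕ) + 1 : ℕ) : ℝ) * sortDesc D K + (∑ i, max (D i - sortDesc D K) 0)
        = ∑ i ∈ Finset.Iic K, sortDesc D i ∧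
      IsLeast (Set.range fun t : ℝ => (((K : ℕ) + 1 : ℕ) : ℝ) * t + ∑ i, max (D i - t) 0)
        (∑ i ∈ Finset.Iic K, sortDesc D i) := by
  set σ := Tuple.sort (fun j => -D j) with hσ
  set s := sortDesc D with hs
  have hsdef : ∀ i, s i = D (σ i) := fun i => rfl
  have hanti : ∀ i j : Fin n, i ≤ j → s j ≤ s i := by
    intro i j hij
    have := Tuple.monotone_sort (fun j => -D j) hij
    simp only [Function.comp_apply] at this
    have := neg_le_neg this
    simpa [hsdef] using this
  have hperm : ∀ t : ℝ, ∑ i, max (D i - t) 0 = ∑ i, max (s i - t) 0 := by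
    intro t
    exact (Equiv.sum_comp σ (fun i => max (D i - t) 0)).symm
  have hcard : (Finset.Iic K).card = (K : ℕ) + 1 := by simp [Fin.card_Iic]
  -- general lower bound computation
  have hsum : ∀ t : ℝ,
      ∑ i ∈ Finset.Iic K, (s i - t) = ∑ i ∈ Finset.Iic K, s i - (((K : ℕ) + 1 : ℕ) : ℝ) * t := by
    intro t
    rw [Finset.sum_sub_distrib, Finset.sum_const, hcard]
    push_cast
    ring
  have key : ∑ i, max (D i - s K) 0 = ∑ i ∈ Finset.Iic K, s i - (((K : ℕ) + 1 : ℕ) : ℝ) * s K := by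
    rw [hperm]
    have h1 : ∑ i, max (s i - s K) 0 = ∑ i ∈ Finset.Iic K, max (s i - s K) 0 := by
      refine (Finset.sum_subset (Finset.subset_univ _) ?_).symm
      intro i _ hi
      have hKi : K ≤ i := le_of_not_ge (by simpa [Finset.mem_Iic] using hi)
      have := hanti K i hKi
      simp [max_eq_right, sub_nonpos.mpr this]
    rw [h1, ← hsum]
    apply Finset.sum_congr rfl
    intro i hi
    have := hanti i K (Finset.mem_Iic.mp hi)
    simp [max_eq_left, sub_nonneg.mpr this]
  constructor
  · rw [key]; ring
  · constructor
    · exact ⟨s K, by simp only []; rw [key]; ring⟩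
    · rintro x ⟨t, rfl⟩
      simp only [hperm]
      have h2 : ∑ i ∈ Finset.Iic K, (s i - t) ≤ ∑ i, max (s i - t) 0 := by
        calc ∑ i ∈ Finset.Iic K, (s i - t) ≤ ∑ i ∈ Finset.Iic K, max (s i - t) 0 :=
              Finset.sum_le_sum fun i _ => le_max_left _ _
          _ ≤ ∑ i, max (s i - t) 0 :=
              Finset.sum_le_sum_of_subset_of_nonneg (Finset.subset_univ _)
                fun i _ _ => le_max_right _ _
      have := hsum t
      linarith
end

section
/- Let n ≥ 1, let D ∈ ℝ^n, and let 1 ≤ K ≤ n. Then ∑_{i=1}^K D_{(i)} = (1/n)·( K·∑_{i=1}^n D_i + min_{t∈ℝ} ∑_{i=1}^n ( K·(t − D_i)_+ + (n − K)·(D_i − t)_+ ) ), and the inner minimum is attained at t = D_{(K)}, the K-th largest entry of D. -/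
/-- The inner function of the Ogryczak–Tamir representation:
`t ↦ ∑_i (K·(t − D_i)_+ + (n − K)·(D_i − t)_+)`. -/
noncomputable def otInner {n : ℕ} (D : Fin n → ℝ) (K : ℕ) (t : ℝ) : ℝ :=
  ∑ i, ((K : ℝ) * max (t - D i) 0 + ((n : ℝ) - (K : ℝ)) * max (D i - t) 0)

lemma sortDesc_antitone {n : ℕ} (D : Fin n → ℝ) : Antitone (sortDesc D) := by
  intro i j hij
  have h := Tuple.monotone_sort (fun j => -D j) hij
  simp only [Function.comp] at h
  simp only [sortDesc]
  linarith

lemma sum_sortDesc {n : ℕ} (D : Fin n → ℝ) (h : ℝ → ℝ) :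
    ∑ i, h (sortDesc D i) = ∑ i, h (D i) :=
  Equiv.sum_comp (Tuple.sort fun j => -D j) (fun i => h (D i))

lemma otInner_eq {n : ℕ} (D : Fin n → ℝ) (k : ℕ) (t : ℝ) :
    otInner D k t = (n : ℝ) * ((k : ℝ) * t + ∑ i, max (D i - t) 0)
      - (k : ℝ) * ∑ i, D i := by
  unfold otInner
  have : ∀ i : Fin n, (k : ℝ) * max (t - D i) 0 + ((n : ℝ) - (k : ℝ)) * max (D i - t) 0
      = (k : ℝ) * t + (n : ℝ) * max (D i - t) 0 - (k : ℝ) * D i := by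
    intro i
    rcases le_total (D i) t with h | h
    · rw [max_eq_left (by linarith), max_eq_right (by linarith)]; ring
    · rw [max_eq_right (by linarith), max_eq_left (by linarith)]; ring
  rw [Finset.sum_congr rfl fun i _ => this i]
  rw [Finset.sum_sub_distrib, Finset.sum_add_distrib, Finset.sum_const, Finset.card_univ,
    Fintype.card_fin, nsmul_eq_mul, ← Finset.mul_sum, ← Finset.mul_sum]
  ring

/-- value at `t* = S K`. -/
lemma g_value {n : ℕ} (D : Fin n → ℝ) (K : Fin n) :
    ((K : ℕ) + 1 : ℝ) * sortDesc D K + ∑ i, max (D i - sortDesc D K) 0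
      = ∑ i ∈ Finset.Iic K, sortDesc D i := by
  set t := sortDesc D K with ht
  have hperm := sum_sortDesc D (fun x => max (x - t) 0)
  rw [← hperm]
  have h1 : ∑ i ∈ Finset.Iic K, max (sortDesc D i - t) 0
      = ∑ i : Fin n, max (sortDesc D i - t) 0 := by
    apply Finset.sum_subset (Finset.subset_univ _)
    intro i _ hi
    have hKi : K ≤ i := le_of_lt (by simpa using hi)
    have : sortDesc D i ≤ t := sortDesc_antitone D hKi
    exact max_eq_right (by linarith)
  rw [← h1]
  have h2 : ∑ i ∈ Finset.Iic K, max (sortDesc D i - t) 0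
      = ∑ i ∈ Finset.Iic K, (sortDesc D i - t) := by
    refine Finset.sum_congr rfl fun i hi => ?_
    have : t ≤ sortDesc D i := sortDesc_antitone D (Finset.mem_Iic.mp hi)
    exact max_eq_left (by linarith)
  rw [h2, Finset.sum_sub_distrib, Finset.sum_const, Fin.card_Iic]
  ring

/-- lower bound for all `t`. -/
lemma g_lb {n : ℕ} (D : Fin n → ℝ) (K : Fin n) (t : ℝ) :
    ∑ i ∈ Finset.Iic K, sortDesc D i
      ≤ ((K : ℕ) + 1 : ℝ) * t + ∑ i, max (D i - t) 0 := by
  have hperm := sum_sortDesc D (fun x => max (x - t) 0)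
  rw [← hperm]
  have h1 : ∑ i ∈ Finset.Iic K, max (sortDesc D i - t) 0
      ≤ ∑ i : Fin n, max (sortDesc D i - t) 0 :=
    Finset.sum_le_sum_of_subset_of_nonneg (Finset.subset_univ _)
      (fun i _ _ => le_max_right _ _)
  have h2 : ∑ i ∈ Finset.Iic K, sortDesc D i
      ≤ ((K : ℕ) + 1 : ℝ) * t + ∑ i ∈ Finset.Iic K, max (sortDesc D i - t) 0 := by
    have : ∑ i ∈ Finset.Iic K, sortDesc D i
        ≤ ∑ i ∈ Finset.Iic K, (t + max (sortDesc D i - t) 0) := by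
      refine Finset.sum_le_sum fun i _ => ?_
      have := le_max_left (sortDesc D i - t) 0
      linarith
    rw [Finset.sum_add_distrib, Finset.sum_const, Fin.card_Iic, nsmul_eq_mul] at this
    push_cast at this ⊢
    linarith
  linarith

/-- Ogryczak–Tamir representation of the `K`-centrum:
`∑_{i=1}^K D_{(i)} = (1/n)(K ∑_i D_i + min_t ∑_i (K(t−D_i)_+ + (n−K)(D_i−t)_+))`,
the inner minimum being attained at `t = D_{(K)}`
(here `K : Fin n` stands for the 1-based value `K+1`). -/
theorem stmt5 {n : ℕ} (hn : 1 ≤ n) (D : Fin n → ℝ) (K : Fin n) :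
    IsLeast (Set.range fun t : ℝ => otInner D ((K : ℕ) + 1) t)
        (otInner D ((K : ℕ) + 1) (sortDesc D K)) ∧
      ∑ i ∈ Finset.Iic K, sortDesc D i
        = (1 / (n : ℝ)) * ((((K : ℕ) + 1 : ℕ) : ℝ) * ∑ i, D i
            + otInner D ((K : ℕ) + 1) (sortDesc D K)) := by
  have hn0 : (0 : ℝ) < (n : ℝ) := by exact_mod_cast hn
  set t₀ := sortDesc D K with ht₀
  have hval := g_value D K
  constructor
  · constructor
    · exact ⟨t₀, rfl⟩
    · rintro y ⟨t, rfl⟩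
      simp only [otInner_eq]
      have hlb := g_lb D K t
      rw [← hval] at hlb
      push_cast
      nlinarith [hlb]
  · rw [otInner_eq, ← hval]
    push_cast
    field_simp
    rw [ht₀]; ring
end

section
/- Let n ≥ 1, let λ ∈ ℝ^n satisfy λ_1 ≥ λ_2 ≥ ⋯ ≥ λ_n ≥ 0, and let D ∈ ℝ^n have nonnegative entries. Then there exist u, v ∈ ℝ^n with u_i + v_k ≥ λ_k D_i for all i, k ∈ {1,…,n} and ∑_{i=1}^n u_i + ∑_{k=1}^n v_k = ∑_{k=1}^n λ_k D_{(k)}. Consequently, min{ ∑_{i=1}^n u_i + ∑_{k=1}^n v_k : u, v ∈ ℝ^n, u_i + v_k ≥ λ_k D_i for all i, k } = ∑_{k=1}^n λ_k D_{(k)}. -/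
/-- Strong duality for the BEP (dual assignment) formulation: the minimum of
`∑_i u_i + ∑_k v_k` over all `u, v` with `u_i + v_k ≥ λ_k D_i` equals
`∑_k λ_k D_{(k)}`, and it is attained. -/
theorem stmt10 {n : ℕ} (hn : 1 ≤ n) (lam D : Fin n → ℝ)
    (hlam : Antitone lam) (hlam0 : ∀ i, 0 ≤ lam i) (hD : ∀ i, 0 ≤ D i) :
    IsLeast {y : ℝ | ∃ u v : Fin n → ℝ,
        (∀ i k, lam k * D i ≤ u i + v k) ∧ y = ∑ i, u i + ∑ k, v k}
      (∑ k, lam k * sortDesc D k) := by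
  classical
  set σ := Tuple.sort (fun j => -D j) with hσ
  have hmono : Monotone ((fun j => -D j) ∘ σ) := Tuple.monotone_sort _
  have hanti : Antitone (fun k : Fin n => D (σ k)) := by
    intro a b hab
    have := hmono hab
    simpa using this
  have hds : ∀ k : Fin n, sortDesc D k = D (σ k) := fun k => rfl
  -- extend lam and the sorted D to ℕ
  set L : ℕ → ℝ := fun m => if h : m < n then lam ⟨m, h⟩ else 0 with hL
  set d' : ℕ → ℝ := fun m => if h : m < n then D (σ ⟨m, h⟩) else 0 with hd'
  have hLfin : ∀ k : Fin n, L k.val = lam k := by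
    intro k; simp [hL, k.isLt]
  have hdfin : ∀ k : Fin n, d' k.val = D (σ k) := by
    intro k; simp [hd', k.isLt]
  have hLanti : ∀ m, L (m + 1) ≤ L m := by
    intro m
    by_cases h : m + 1 < n
    · have hm : m < n := Nat.lt_of_succ_lt h
      simp only [hL, dif_pos h, dif_pos hm]
      exact hlam (by exact Fin.mk_le_mk.mpr (Nat.le_succ m))
    · by_cases hm : m < n
      · simp only [hL, dif_neg h, dif_pos hm]
        exact hlam0 _
      · simp [hL, dif_neg h, dif_neg hm]
  have hd'anti : ∀ a b : ℕ, a ≤ b → b < n → d' b ≤ d' a := by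
    intro a b hab hb
    have ha : a < n := lt_of_le_of_lt hab hb
    simp only [hd', dif_pos ha, dif_pos hb]
    exact hanti (Fin.mk_le_mk.mpr hab)
  -- telescoping
  have htel : ∀ k : ℕ, k ≤ n → ∑ m ∈ Finset.Ico k n, (L m - L (m + 1)) = L k := by
    intro k hk
    rw [Finset.sum_Ico_eq_sub _ hk, Finset.sum_range_sub' L, Finset.sum_range_sub' L]
    have hLn : L n = 0 := by simp [hL]
    rw [hLn]; ring
  set U : ℝ → ℝ := fun t => ∑ m ∈ Finset.range n, (L m - L (m + 1)) * max (t - d' m) 0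
    with hU
  -- key subgradient inequality
  have key : ∀ (s : ℝ) (k : Fin n), L k.val * (s - d' k.val) ≤ U s - U (d' k.val) := by
    intro s k
    have h1 : U s - U (d' k.val) =
        ∑ m ∈ Finset.range n,
          (L m - L (m + 1)) * (max (s - d' m) 0 - max (d' k.val - d' m) 0) := by
      rw [hU, ← Finset.sum_sub_distrib]
      exact Finset.sum_congr rfl fun m _ => (mul_sub _ _ _).symm
    have h2 : ∑ m ∈ Finset.range n,
        (if k.val ≤ m then (L m - L (m + 1)) * (s - d' k.val) else 0) ≤
        ∑ m ∈ Finset.range n,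
          (L m - L (m + 1)) * (max (s - d' m) 0 - max (d' k.val - d' m) 0) := by
      apply Finset.sum_le_sum
      intro m hm
      have hmn : m < n := Finset.mem_range.mp hm
      have hc : 0 ≤ L m - L (m + 1) := sub_nonneg.mpr (hLanti m)
      by_cases hkm : k.val ≤ m
      · rw [if_pos hkm]
        apply mul_le_mul_of_nonneg_left _ hc
        have hdm : d' m ≤ d' k.val := hd'anti k.val m hkm hmn
        have : max (d' k.val - d' m) 0 = d' k.val - d' m :=
          max_eq_left (by linarith)
        rw [this]
        have := le_max_left (s - d' m) 0
        linarith
      · rw [if_neg hkm]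
        apply mul_nonneg hc
        have hmk : m ≤ k.val := le_of_not_ge hkm
        have hdm : d' k.val ≤ d' m := hd'anti m k.val hmk k.isLt
        have : max (d' k.val - d' m) 0 = 0 := max_eq_right (by linarith)
        rw [this]
        simpa using le_max_right (s - d' m) 0
    have h3 : ∑ m ∈ Finset.range n,
        (if k.val ≤ m then (L m - L (m + 1)) * (s - d' k.val) else 0)
        = L k.val * (s - d' k.val) := by
      rw [← Finset.sum_filter]
      have hfil : (Finset.range n).filter (fun m => k.val ≤ m) = Finset.Ico k.val n := by
        ext m
        simp [Finset.mem_filter, Finset.mem_range, Finset.mem_Ico, and_comm]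
      rw [hfil, ← Finset.sum_mul, htel k.val (le_of_lt k.isLt)]
    linarith [h2, h3.symm ▸ h2]
  -- the dual solution
  refine ⟨⟨fun i => U (D i), fun k => lam k * sortDesc D k - U (d' k.val), ?_, ?_⟩, ?_⟩
  · intro i k
    have h := key (D i) k
    rw [hLfin, hdfin] at h
    dsimp only
    rw [hds, hdfin]
    linarith
  · have hsum : ∑ i, U (D i) = ∑ k : Fin n, U (d' k.val) := by
      rw [← Equiv.sum_comp σ (fun i => U (D i))]
      exact Finset.sum_congr rfl fun k _ => by rw [hdfin]
    rw [hsum, Finset.sum_sub_distrib]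
    ring
  · rintro y ⟨u, v, hc, rfl⟩
    have h1 : ∀ k : Fin n, lam k * sortDesc D k ≤ u (σ k) + v k := by
      intro k; rw [hds]; exact hc (σ k) k
    calc ∑ k, lam k * sortDesc D k ≤ ∑ k, (u (σ k) + v k) :=
          Finset.sum_le_sum fun k _ => h1 k
      _ = ∑ k, u (σ k) + ∑ k, v k := Finset.sum_add_distrib
      _ = ∑ i, u i + ∑ k, v k := by rw [Equiv.sum_comp σ u]
end

section
/- Let n ≥ 1, let λ ∈ ℝ^n satisfy λ_1 ≥ λ_2 ≥ ⋯ ≥ λ_n ≥ 0, set λ_{n+1} := 0 and Δ_k := λ_k − λ_{k+1}, and let D ∈ ℝ^n. Consider the set F of pairs (t, z) ∈ ℝ^n × ℝ^{n×n} satisfying z_{ik} ≥ D_i − t_k and z_{ik} ≥ 0 for all i, k ∈ {1,…,n}. Then the infimum over F of ∑_{k=1}^n Δ_k ( k·t_k + ∑_{i=1}^n z_{ik} ) equals ∑_{k=1}^n λ_k D_{(k)}, and it is attained at t_k = D_{(k)}, z_{ik} = (D_i − D_{(k)})_+. -/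
private lemma tele_aux (g : ℕ → ℝ) (a : ℕ) : ∀ b, a ≤ b →
    ∑ m ∈ Finset.Ico a b, (g m - g (m+1)) = g a - g b := by
  intro b hb
  induction b, hb using Nat.le_induction with
  | base => simp
  | succ b hb ih => rw [Finset.sum_Ico_succ_top hb, ih]; ring

/-- Correctness of the Ogryczak–Tamir K-sum linear programming representation:
over the set of `(t, z)` with `z_{ik} ≥ D_i − t_k` and `z_{ik} ≥ 0`, the infimum
of `∑_k Δ_k (k·t_k + ∑_i z_{ik})` equals `∑_k λ_k D_{(k)}`, and it is attained at
`t_k = D_{(k)}`, `z_{ik} = (D_i − D_{(k)})_+` (with `Δ_k = λ_k − λ_{k+1}`,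
`λ_{n+1} := 0`; a position index `k : Fin n` stands for the 1-based value `k+1`). -/
theorem stmt11 {n : ℕ} (hn : 1 ≤ n) (lam : Fin n → ℝ)
    (hlam : Antitone lam) (hlam0 : ∀ i, 0 ≤ lam i)
    (Δ : Fin n → ℝ)
    (hΔ : ∀ k : Fin n,
      Δ k = lam k - if h : (k : ℕ) + 1 < n then lam ⟨(k : ℕ) + 1, h⟩ else 0)
    (D : Fin n → ℝ) :
    IsLeast {y : ℝ | ∃ (t : Fin n → ℝ) (z : Fin n → Fin n → ℝ),
        (∀ i k, D i - t k ≤ z i k) ∧ (∀ i k, 0 ≤ z i k) ∧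
        y = ∑ k, Δ k * ((((k : ℕ) + 1 : ℕ) : ℝ) * t k + ∑ i, z i k)}
      (∑ k, lam k * sortDesc D k) ∧
    ∑ k, Δ k * ((((k : ℕ) + 1 : ℕ) : ℝ) * sortDesc D k
        + ∑ i, max (D i - sortDesc D k) 0)
      = ∑ k, lam k * sortDesc D k := by
  set σ : Equiv.Perm (Fin n) := Tuple.sort (fun j => -D j) with hσ
  set s : Fin n → ℝ := sortDesc D with hsdef
  have hsD : ∀ i, s i = D (σ i) := fun i => rfl
  -- s is antitone
  have hs : Antitone s := by
    intro a b hab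
    have := Tuple.monotone_sort (fun j => -D j) hab
    simp only [Function.comp_apply] at this
    rw [hsD a, hsD b]
    linarith
  -- permutation sums
  have hperm : ∀ g : Fin n → ℝ, ∑ i, g (σ i) = ∑ i, g i := fun g => Equiv.sum_comp σ g
  -- counting
  have hcount : ∀ (k : Fin n) (c : ℝ),
      ∑ i : Fin n, (if i ≤ k then c else 0) = (((k:ℕ)+1 : ℕ) : ℝ) * c := by
    intro k c
    have h1 : ∀ i : Fin n, (if i ≤ k then c else 0) = (if i ≤ k then (1:ℝ) else 0) * c := by
      intro i; split <;> ring
    rw [Finset.sum_congr rfl (fun i _ => h1 i), ← Finset.sum_mul, Finset.sum_boole]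
    have : Finset.univ.filter (fun i : Fin n => i ≤ k) = Finset.Iic k := by ext i; simp
    rw [this, Fin.card_Iic]
  -- partial sums of s
  set T : Fin n → ℝ := fun k => ∑ i, (if i ≤ k then s i else 0) with hT
  -- key per-k identity
  have key1 : ∀ k : Fin n,
      (((k:ℕ)+1 : ℕ) : ℝ) * s k + ∑ i, max (D i - s k) 0 = T k := by
    intro k
    have h1 : ∑ i, max (D i - s k) 0 = ∑ i, max (s i - s k) 0 := by
      rw [← hperm (fun x => max (D x - s k) 0)]
      rfl
    have h2 : ∀ i : Fin n, max (s i - s k) 0 =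
        (if i ≤ k then s i else 0) - (if i ≤ k then s k else 0) := by
      intro i
      rcases le_or_gt i k with h | h
      · have := hs h
        simp [h, max_eq_left, sub_nonneg.mpr this]
      · have := hs h.le
        simp [not_le.mpr h, max_eq_right, sub_nonpos.mpr this]
    rw [h1, Finset.sum_congr rfl (fun i _ => h2 i), Finset.sum_sub_distrib, hcount k (s k)]
    ring
  -- Δ extended to ℕ, telescoping
  set lamE : ℕ → ℝ := fun m => if h : m < n then lam ⟨m, h⟩ else 0 with hlamE
  set ΔE : ℕ → ℝ := fun m => if h : m < n then Δ ⟨m, h⟩ else 0 with hΔE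
  have hΔE' : ∀ m, ΔE m = lamE m - lamE (m+1) := by
    intro m
    by_cases h : m < n
    · simp only [hΔE, hlamE, dif_pos h, hΔ ⟨m, h⟩]
    · have h' : ¬ (m + 1 < n) := by omega
      simp only [hΔE, hlamE, dif_neg h, dif_neg h']; ring
  have htel : ∀ k : Fin n, lam k = ∑ j, (if k ≤ j then Δ j else 0) := by
    intro k
    have h1 : ∑ j : Fin n, (if k ≤ j then Δ j else 0)
        = ∑ m ∈ Finset.range n, (if (k:ℕ) ≤ m then ΔE m else 0) := by
      rw [← Fin.sum_univ_eq_sum_range (fun m => if (k:ℕ) ≤ m then ΔE m else 0)]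
      apply Finset.sum_congr rfl
      intro i _
      simp only [hΔE, Fin.is_lt, dif_pos, Fin.le_def, Fin.eta]
    have h2 : (Finset.range n).filter (fun m => (k:ℕ) ≤ m) = Finset.Ico (k:ℕ) n := by
      ext m; simp [Finset.mem_Ico]; omega
    rw [h1, ← Finset.sum_filter, h2,
      Finset.sum_congr rfl (fun m _ => hΔE' m), tele_aux lamE (k:ℕ) n k.2.le]
    have : lamE n = 0 := by simp [hlamE]
    simp [this, hlamE, k.2]
  -- Abel summation
  have habel : ∑ k, lam k * s k = ∑ k, Δ k * T k := by
    calc ∑ k, lam k * s k = ∑ k, ∑ j, (if k ≤ j then Δ j * s k else 0) := by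
          apply Finset.sum_congr rfl; intro k _
          rw [htel k, Finset.sum_mul]
          apply Finset.sum_congr rfl; intro j _
          split <;> ring
      _ = ∑ j, ∑ k, (if k ≤ j then Δ j * s k else 0) := Finset.sum_comm
      _ = ∑ j, Δ j * T j := by
          apply Finset.sum_congr rfl; intro j _
          rw [hT, Finset.mul_sum]
          apply Finset.sum_congr rfl; intro k _
          split <;> ring
  -- Δ nonneg
  have hΔ0 : ∀ k, 0 ≤ Δ k := by
    intro k
    rw [hΔ k]
    split
    · rename_i h
      have : k ≤ (⟨(k:ℕ)+1, h⟩ : Fin n) := by simp [Fin.le_def]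
      linarith [hlam this]
    · simpa using hlam0 k
  -- the attainment equality
  have hattain : ∑ k, Δ k * ((((k : ℕ) + 1 : ℕ) : ℝ) * s k
      + ∑ i, max (D i - s k) 0) = ∑ k, lam k * s k := by
    rw [habel]
    exact Finset.sum_congr rfl (fun k _ => by rw [key1 k])
  refine ⟨⟨⟨s, fun i k => max (D i - s k) 0, fun i k => le_max_left _ _,
      fun i k => le_max_right _ _, hattain.symm⟩, ?_⟩, hattain⟩
  -- lower bound
  rintro y ⟨t, z, hz1, hz2, rfl⟩
  rw [habel]
  apply Finset.sum_le_sum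
  intro k _
  apply mul_le_mul_of_nonneg_left _ (hΔ0 k)
  -- T k ≤ (k+1) t k + ∑ i, z i k
  have step1 : T k ≤ ∑ i : Fin n, (if i ≤ k then t k + z (σ i) k else 0) := by
    apply Finset.sum_le_sum
    intro i _
    split
    · rw [hsD i]
      have := hz1 (σ i) k
      linarith
    · exact le_rfl
  have step2 : ∑ i : Fin n, (if i ≤ k then t k + z (σ i) k else 0)
      = (((k:ℕ)+1 : ℕ) : ℝ) * t k + ∑ i : Fin n, (if i ≤ k then z (σ i) k else 0) := by
    have h : ∀ i : Fin n, (if i ≤ k then t k + z (σ i) k else 0)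
        = (if i ≤ k then t k else 0) + (if i ≤ k then z (σ i) k else 0) := by
      intro i; split <;> ring
    rw [Finset.sum_congr rfl (fun i _ => h i), Finset.sum_add_distrib, hcount k (t k)]
  have step3 : ∑ i : Fin n, (if i ≤ k then z (σ i) k else 0) ≤ ∑ i : Fin n, z i k := by
    rw [← hperm (fun i => z i k)]
    apply Finset.sum_le_sum
    intro i _
    split
    · exact le_rfl
    · exact hz2 _ _
  linarith
end

section
/- Let ‖·‖ be a norm on ℝ^d, let a ∈ ℝ^d, let J be a nonempty finite index set, and for each l ∈ J let N_l ⊆ ℝ^d be a nonempty compact set. Suppose j ∈ J is such that { j' ∈ J : D̂(a, N_k) ≥ d̂(a, N_{j'}) for all k ∈ J with k ≠ j' } = { j }. Then for every placement (ā_l)_{l ∈ J} with ā_l ∈ N_l for all l, one has ‖a − ā_j‖ = min_{l ∈ J} ‖a − ā_l‖, and ‖a − ā_{j'}‖ > min_{l ∈ J} ‖a − ā_l‖ for every j' ∈ J with j' ≠ j; that is, the minimum of l ↦ ‖a − ā_l‖ over J is attained exactly at j. -/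
/-- `Dhat a N = max_{y ∈ N} ‖a − y‖`, the largest distance from `a` to `N`. -/
noncomputable def Dhat {V : Type*} [NormedAddCommGroup V] (a : V) (N : Set V) : ℝ :=
  sSup ((fun y => ‖a - y‖) '' N)

/-- `dhat a N = min_{y ∈ N} ‖a − y‖`, the smallest distance from `a` to `N`. -/
noncomputable def dhat {V : Type*} [NormedAddCommGroup V] (a : V) (N : Set V) : ℝ :=
  sInf ((fun y => ‖a - y‖) '' N)

lemma dhat_le_norm {V : Type*} [NormedAddCommGroup V] (a : V) {N : Set V} {y : V}
    (hy : y ∈ N) : dhat a N ≤ ‖a - y‖ :=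
  csInf_le ⟨0, by rintro _ ⟨z, _, rfl⟩; exact norm_nonneg _⟩ ⟨y, hy, rfl⟩

lemma norm_le_Dhat {V : Type*} [NormedAddCommGroup V] (a : V) {N : Set V}
    (hc : IsCompact N) {y : V} (hy : y ∈ N) : ‖a - y‖ ≤ Dhat a N :=
  le_csSup (hc.image ((continuous_const.sub continuous_id).norm)).bddAbove ⟨y, hy, rfl⟩

/-- Variable fixing, item 3: if `j` is the only index not eliminated by the rule
"some `k ≠ j'` has `D̂(a, N_k) < d̂(a, N_{j'})`", i.e.
`{j' : ∀ k ≠ j', D̂(a, N_k) ≥ d̂(a, N_{j'})} = {j}`, then for every placement `ā`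
with `ā_l ∈ N_l`, the minimum of `l ↦ ‖a − ā_l‖` is attained exactly at `j`. -/
theorem stmt17 {V : Type*} [NormedAddCommGroup V] [NormedSpace ℝ V]
    {J : Type*} [Fintype J] [Nonempty J]
    (a : V) (N : J → Set V) (hNne : ∀ l, (N l).Nonempty)
    (hNc : ∀ l, IsCompact (N l))
    (j : J)
    (h : {j' : J | ∀ k, k ≠ j' → dhat a (N j') ≤ Dhat a (N k)} = {j})
    (abar : J → V) (habar : ∀ l, abar l ∈ N l) :
    ‖a - abar j‖ = Finset.univ.inf' Finset.univ_nonempty (fun l => ‖a - abar l‖)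
      ∧ ∀ j', j' ≠ j →
        Finset.univ.inf' Finset.univ_nonempty (fun l => ‖a - abar l‖)
          < ‖a - abar j'‖ := by
  have hnot : ∀ j', j' ≠ j → ∃ k, k ≠ j' ∧ Dhat a (N k) < dhat a (N j') := by
    intro j' hne
    have hmem : j' ∉ {j' : J | ∀ k, k ≠ j' → dhat a (N j') ≤ Dhat a (N k)} := by
      rw [h]; simpa using hne
    simp only [Set.mem_setOf_eq, not_forall] at hmem
    obtain ⟨k, hk, hlt⟩ := hmem
    exact ⟨k, hk, not_le.mp hlt⟩
  -- a minimizer of Dhat must be j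
  obtain ⟨k0, -, hk0⟩ := Finset.exists_min_image Finset.univ (fun l => Dhat a (N l))
    Finset.univ_nonempty
  have hdD : ∀ l, dhat a (N l) ≤ Dhat a (N l) := fun l => by
    obtain ⟨y, hy⟩ := hNne l
    exact (dhat_le_norm a hy).trans (norm_le_Dhat a (hNc l) hy)
  have hk0j : k0 = j := by
    by_contra hne
    obtain ⟨m, hm, hlt⟩ := hnot k0 hne
    exact absurd (hk0 m (Finset.mem_univ m)) (not_le.mpr (hlt.trans_le (hdD k0)))
  have key : ∀ j', j' ≠ j → ‖a - abar j‖ < ‖a - abar j'‖ := by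
    intro j' hne
    obtain ⟨k, hk, hlt⟩ := hnot j' hne
    calc ‖a - abar j‖ ≤ Dhat a (N j) := norm_le_Dhat a (hNc j) (habar j)
      _ ≤ Dhat a (N k) := hk0j ▸ hk0 k (Finset.mem_univ k)
      _ < dhat a (N j') := hlt
      _ ≤ ‖a - abar j'‖ := dhat_le_norm a (habar j')
  have heq : ‖a - abar j‖
      = Finset.univ.inf' Finset.univ_nonempty (fun l => ‖a - abar l‖) := by
    refine le_antisymm ?_ (Finset.inf'_le _ (Finset.mem_univ j))
    refine Finset.le_inf' _ _ fun l _ => ?_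
    by_cases hl : l = j
    · subst hl; exact le_rfl
    · exact (key l hl).le
  exact ⟨heq, fun j' hne => heq ▸ key j' hne⟩
end
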